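/- arXiv:2309.15102 — 2 statements merged into one kernel-verified Lean document; each statement's English description precedes it below -/
import Mathlib

section
/- Suppose X⁺, X⁻ : ℤ → ℂ satisfy X⁻ = −R₋(\overline{X⁺}), and define κ = −(1/2)(∂₋X⁺ + ∂₊X⁻). Then the difference between the equation Ẋ⁺ = (∂₊κ)X⁺ − (∂₊X⁺)X⁺ − (∂₋X⁺)X⁻ and the complex conjugate of Ẋ⁻ = (∂₋κ)X⁻ − (∂₋X⁻)X⁻ − (∂₊X⁻)X⁺ (using the reality condition to identify Ẋ⁺ with −R₊(\overline{Ẋ⁻})) is equivalent to the single equation Δ_ℤ(X⁺·R₊X⁻) = 0, where Δ_ℤ = R₊ + R₋ − 2·id. -/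
/-- For the flat metric on ℤ, under the reality condition X⁻ = −R₋(conj X⁺)
(and the corresponding identification Ẋ⁺ = −R₊(conj Ẋ⁻)), the pair of geodesic
velocity equations for X⁺ and X⁻ is equivalent to the first velocity equation
together with the improved auxiliary equation Δ_ℤ(X⁺·R₊X⁻) = 0. -/
theorem lattice_flat_improved_auxiliary
    (Xp Xm dXp dXm κ : ℤ → ℂ)
    (hreal : ∀ i : ℤ, Xm i = -(starRingEnd ℂ) (Xp (i - 1)))
    (hdreal : ∀ i : ℤ, dXp i = -(starRingEnd ℂ) (dXm (i + 1)))
    (hκ : ∀ i : ℤ, κ i = -(1 / 2) *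
        ((Xp (i - 1) - Xp i) + (Xm (i + 1) - Xm i))) :
    ((∀ i : ℤ, dXp i = (κ (i + 1) - κ i) * Xp i
          - (Xp (i + 1) - Xp i) * Xp i - (Xp (i - 1) - Xp i) * Xm i) ∧
     (∀ i : ℤ, dXm i = (κ (i - 1) - κ i) * Xm i
          - (Xm (i - 1) - Xm i) * Xm i - (Xm (i + 1) - Xm i) * Xp i))
    ↔ ((∀ i : ℤ, dXp i = (κ (i + 1) - κ i) * Xp i
          - (Xp (i + 1) - Xp i) * Xp i - (Xp (i - 1) - Xp i) * Xm i) ∧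
       (∀ i : ℤ, Xp (i + 1) * Xm (i + 2) + Xp (i - 1) * Xm i
          - 2 * (Xp i * Xm (i + 1)) = 0)) := by
  have hXmc : ∀ j : ℤ, (starRingEnd ℂ) (Xm j) = -Xp (j - 1) := by
    intro j; rw [hreal]; simp
  have hXpc : ∀ j : ℤ, (starRingEnd ℂ) (Xp j) = -Xm (j + 1) := by
    intro j
    have := hreal (j + 1)
    simp only [add_sub_cancel_right] at this
    rw [this]; simp
  have hκc : ∀ j : ℤ, (starRingEnd ℂ) (κ j) = κ j := by
    intro j
    rw [hκ]
    simp only [map_mul, map_add, map_sub, map_neg, map_div₀, map_one, map_ofNat,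
      hXmc, hXpc, show j - 1 + 1 = j from by ring, show j + 1 - 1 = j from by ring]
    ring
  constructor
  · rintro ⟨h1, h2⟩
    refine ⟨h1, fun i => ?_⟩
    have B := congrArg (starRingEnd ℂ) (h2 (i + 1))
    simp only [map_sub, map_mul, hκc, hXmc, hXpc, add_sub_cancel_right,
      show i + 2 - 1 = i + 1 from by ring, show i + 1 + 1 = i + 2 from by ring] at B
    have k0 := hκ i
    have k1 := hκ (i + 1)
    simp only [add_sub_cancel_right, show i + 1 + 1 = i + 2 from by ring] at k1
    linear_combination (h1 i) - hdreal i + B - 2 * Xp i * k0 + 2 * Xp i * k1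
  · rintro ⟨h1, haux⟩
    refine ⟨h1, fun i => ?_⟩
    apply (starRingEnd ℂ).injective
    have E := hdreal (i - 1)
    simp only [sub_add_cancel] at E
    have G := haux (i - 1)
    simp only [show i - 1 + 1 = i from by ring, show i - 1 + 2 = i + 1 from by ring,
      show i - 1 - 1 = i - 2 from by ring] at G
    have A := h1 (i - 1)
    simp only [show i - 1 + 1 = i from by ring, show i - 1 - 1 = i - 2 from by ring] at A
    have k0 := hκ i
    have k1 := hκ (i - 1)
    simp only [show i - 1 + 1 = i from by ring, show i - 1 - 1 = i - 2 from by ring] at k1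
    simp only [map_sub, map_mul, hκc, hXmc, hXpc,
      show i - 1 + 1 = i from by ring, show i + 1 - 1 = i from by ring,
      show i - 1 - 1 = i - 2 from by ring]
    linear_combination E - A + G - 2 * Xp (i - 1) * k0 + 2 * Xp (i - 1) * k1
end

section
/- Suppose ψ : ℝ × ℤ → ℂ (finitely supported in the ℤ variable at each time) satisfies ψ̇ = −(∂₊ψ)X⁺ − (∂₋ψ)X⁻ − ψκ, where X⁺, X⁻ : ℤ → ℂ satisfy X⁻ = −R₋(\overline{X⁺}) and κ = −(1/2)(∂₋X⁺ + ∂₊X⁻). Then the quantity Σ_i |ψ(s,i)|² is conserved: d/ds Σ_i \overline{ψ(s,i)}ψ(s,i) = 0. -/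
/-- Unitarity of the amplitude flow on the flat lattice line: if ψ evolves by
ψ̇ = −(∂₊ψ)X⁺ − (∂₋ψ)X⁻ − ψκ with X⁻ = −R₋(conj X⁺) and
κ = −(1/2)(∂₋X⁺ + ∂₊X⁻), then Σ_i |ψ(s,i)|² is conserved. -/
theorem lattice_amplitude_flow_unitary
    (ψ : ℝ → ℤ → ℂ) (Xp Xm κ : ℤ → ℂ)
    (hbdd : ∃ C : ℝ, ∀ i : ℤ, ‖Xp i‖ ≤ C)
    (hreal : ∀ i : ℤ, Xm i = -(starRingEnd ℂ) (Xp (i - 1)))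
    (hκ : ∀ i : ℤ, κ i = -(1 / 2) *
        ((Xp (i - 1) - Xp i) + (Xm (i + 1) - Xm i)))
    (hsupp : ∀ K : Set ℝ, IsCompact K → ∃ S : Finset ℤ,
        ∀ s ∈ K, ∀ i : ℤ, i ∉ S → ψ s i = 0)
    (hflow : ∀ s (i : ℤ), HasDerivAt (fun t => ψ t i)
        (-(ψ s (i + 1) - ψ s i) * Xp i - (ψ s (i - 1) - ψ s i) * Xm i
          - ψ s i * κ i) s) :
    ∀ s : ℝ, deriv (fun t => ∑ᶠ i : ℤ, (starRingEnd ℂ) (ψ t i) * ψ t i) s = 0 := by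
  intro s
  obtain ⟨S, hS⟩ := hsupp (Set.Icc (s - 1) (s + 1)) isCompact_Icc
  set T : Finset ℤ := S ∪ S.image (· - 1) with hT
  have hST : S ⊆ T := Finset.subset_union_left
  -- abbreviation for the time-derivative of ψ at time s
  set d : ℤ → ℂ := fun i =>
    -(ψ s (i + 1) - ψ s i) * Xp i - (ψ s (i - 1) - ψ s i) * Xm i - ψ s i * κ i
    with hd
  -- the "current"
  set Q : ℤ → ℂ := fun i =>
    (starRingEnd ℂ) (ψ s i) * ψ s (i + 1) * Xp i
      + (starRingEnd ℂ) ((starRingEnd ℂ) (ψ s i) * ψ s (i + 1) * Xp i) with hQ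
  -- eventual equality with a finite sum
  have hmem : Set.Ioo (s - 1) (s + 1) ∈ nhds s := by
    apply Ioo_mem_nhds <;> linarith
  have hev : (fun t => ∑ᶠ i : ℤ, (starRingEnd ℂ) (ψ t i) * ψ t i)
      =ᶠ[nhds s] fun t => ∑ i ∈ T, (starRingEnd ℂ) (ψ t i) * ψ t i := by
    filter_upwards [hmem] with t ht
    refine finsum_eq_sum_of_support_subset _ ?_
    intro i hi
    simp only [Function.mem_support] at hi
    by_contra hiT
    have hiS : i ∉ S := fun h => hiT (Finset.mem_coe.mpr (hST h))
    have : ψ t i = 0 := hS t (Set.mem_Icc.mpr ⟨le_of_lt ht.1, le_of_lt ht.2⟩) i hiS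
    simp [this] at hi
  rw [Filter.EventuallyEq.deriv_eq hev]
  -- derivative of the finite sum
  have hder : HasDerivAt (fun t => ∑ i ∈ T, (starRingEnd ℂ) (ψ t i) * ψ t i)
      (∑ i ∈ T, ((starRingEnd ℂ) (d i) * ψ s i + (starRingEnd ℂ) (ψ s i) * d i)) s := by
    apply HasDerivAt.fun_sum
    intro i _
    have h1 := hflow s i
    have h2 : HasDerivAt (fun t => (starRingEnd ℂ) (ψ t i)) ((starRingEnd ℂ) (d i)) s :=
      h1.star
    exact h2.mul h1
  rw [hder.deriv]
  -- each term telescopes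
  have hterm : ∀ i : ℤ,
      (starRingEnd ℂ) (d i) * ψ s i + (starRingEnd ℂ) (ψ s i) * d i
        = Q (i - 1) - Q i := by
    intro i
    have hκr := hκ i
    rw [hreal i, hreal (i + 1)] at hκr
    simp only [add_sub_cancel_right] at hκr
    simp only [hQ, hd, hκr, hreal i, sub_add_cancel]
    simp only [map_mul, map_sub, map_add, map_neg, map_div₀, map_one, map_ofNat,
      Complex.conj_conj]
    ring
  rw [Finset.sum_congr rfl fun i _ => hterm i, Finset.sum_sub_distrib]
  -- reindex and compare the two sums
  have hQzero : ∀ i : ℤ, i ∉ S → Q i = 0 := by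
    intro i hi
    have : ψ s i = 0 := hS s (by constructor <;> linarith) i hi
    simp [hQ, this]
  have h1 : ∑ i ∈ T, Q (i - 1) = ∑ i ∈ T.image (· - 1), Q i := by
    rw [Finset.sum_image]
    intro a _ b _ h; exact sub_left_injective h
  rw [h1]
  have hsub : ∀ i : ℤ, Q i ≠ 0 → i ∈ T ∩ T.image (· - 1) := by
    intro i hi
    have hiS : i ∈ S := by
      by_contra h; exact hi (hQzero i h)
    have hi1S : i + 1 ∈ S := by
      by_contra h
      have h0 : ψ s (i + 1) = 0 := hS s (by constructor <;> linarith) _ h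
      exact hi (by simp [hQ, h0])
    refine Finset.mem_inter.mpr ⟨hST hiS, ?_⟩
    refine Finset.mem_image.mpr ⟨i + 1, hST hi1S, by omega⟩
  have e1 : ∑ i ∈ T.image (· - 1), Q i = ∑ i ∈ T ∩ T.image (· - 1), Q i := by
    refine (Finset.sum_subset Finset.inter_subset_right ?_).symm
    intro i _ hni
    by_contra h
    exact hni (hsub i h)
  have e2 : ∑ i ∈ T, Q i = ∑ i ∈ T ∩ T.image (· - 1), Q i := by
    refine (Finset.sum_subset Finset.inter_subset_left ?_).symm
    intro i _ hni
    by_contra h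
    exact hni (hsub i h)
  rw [e1, e2, sub_self]
end
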